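/- arXiv:1811.05495 — 2 statements merged into one kernel-verified Lean document; each statement's English description precedes it below -/
import Mathlib

section
/- For all integers d1, d2 ≥ 1, the functions p ↦ α(p) and p ↦ β(p) are continuous on [0,1] and strictly increasing on [0,1]. -/
/-- κ = (d1+1)(d2+1). -/
noncomputable def frogKappa (d1 d2 : ℕ) : ℝ := ((d1 : ℝ) + 1) * ((d2 : ℝ) + 1)

/-- The discriminant Δ(p) = κ² − 2κ(d1+d2)p² + (d2−d1)²p⁴. -/
noncomputable def frogDelta (d1 d2 : ℕ) (p : ℝ) : ℝ :=
  (frogKappa d1 d2) ^ 2 - 2 * (frogKappa d1 d2) * ((d1 : ℝ) + (d2 : ℝ)) * p ^ 2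
    + ((d2 : ℝ) - (d1 : ℝ)) ^ 2 * p ^ 4

/-- α(p) = (κ + p²(d2−d1) − √Δ(p)) / (2 d2 (d1+1) p) for p ≠ 0, and α(0) = 0. -/
noncomputable def frogAlpha (d1 d2 : ℕ) (p : ℝ) : ℝ :=
  if p = 0 then 0 else
    (frogKappa d1 d2 + p ^ 2 * ((d2 : ℝ) - (d1 : ℝ)) - Real.sqrt (frogDelta d1 d2 p)) /
      (2 * (d2 : ℝ) * ((d1 : ℝ) + 1) * p)

/-- β(p) = (κ + p²(d1−d2) − √Δ(p)) / (2 d1 (d2+1) p) for p ≠ 0, and β(0) = 0. -/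
noncomputable def frogBeta (d1 d2 : ℕ) (p : ℝ) : ℝ :=
  if p = 0 then 0 else
    (frogKappa d1 d2 + p ^ 2 * ((d1 : ℝ) - (d2 : ℝ)) - Real.sqrt (frogDelta d1 d2 p)) /
      (2 * (d1 : ℝ) * ((d2 : ℝ) + 1) * p)

/-- Rationalized form of α. -/
noncomputable def frogG (d1 d2 : ℕ) (p : ℝ) : ℝ :=
  2 * ((d2 : ℝ) + 1) * p /
    (frogKappa d1 d2 + p ^ 2 * ((d2 : ℝ) - (d1 : ℝ)) + Real.sqrt (frogDelta d1 d2 p))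

lemma frogDenom_pos (d1 d2 : ℕ) (hd1 : 1 ≤ d1) (hd2 : 1 ≤ d2) {p : ℝ}
    (hp : p ∈ Set.Icc (0 : ℝ) 1) :
    0 < frogKappa d1 d2 + p ^ 2 * ((d2 : ℝ) - (d1 : ℝ)) + Real.sqrt (frogDelta d1 d2 p) := by
  obtain ⟨hp0, hp1⟩ := hp
  have h1 : (1:ℝ) ≤ d1 := by exact_mod_cast hd1
  have h2 : (1:ℝ) ≤ d2 := by exact_mod_cast hd2
  have hsq : p ^ 2 ≤ 1 := by nlinarith
  have hs := Real.sqrt_nonneg (frogDelta d1 d2 p)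
  unfold frogKappa
  nlinarith [sq_nonneg p]

lemma frogDelta_nonneg (d1 d2 : ℕ) {p : ℝ} (hp : p ∈ Set.Icc (0 : ℝ) 1) :
    0 ≤ frogDelta d1 d2 p := by
  obtain ⟨hp0, hp1⟩ := hp
  have h1 : (0:ℝ) ≤ d1 := Nat.cast_nonneg _
  have h2 : (0:ℝ) ≤ d2 := Nat.cast_nonneg _
  have hsq : p ^ 2 ≤ 1 := by nlinarith
  unfold frogDelta frogKappa
  nlinarith [sq_nonneg ((d1:ℝ)*d2 - 1), sq_nonneg (p^2), sq_nonneg ((d1:ℝ)*d2*(1 - p^2)),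
    mul_nonneg (mul_nonneg h1 h2) (sq_nonneg p),
    mul_nonneg (mul_nonneg h1 h2) (sub_nonneg.2 hsq),
    mul_nonneg (add_nonneg h1 h2) (sub_nonneg.2 hsq),
    sq_nonneg ((d1:ℝ)*d2 - p^2), sq_nonneg (((d1:ℝ)*d2 - 1)*p^2)]

lemma frogAlpha_eqOn (d1 d2 : ℕ) (hd1 : 1 ≤ d1) (hd2 : 1 ≤ d2) :
    Set.EqOn (frogAlpha d1 d2) (frogG d1 d2) (Set.Icc (0 : ℝ) 1) := by
  intro p hp
  by_cases h0 : p = 0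
  · simp [frogAlpha, frogG, h0]
  · have hp0 : 0 < p := lt_of_le_of_ne hp.1 (Ne.symm h0)
    have hD := frogDenom_pos d1 d2 hd1 hd2 hp
    have hΔ := frogDelta_nonneg d1 d2 hp
    have hd2' : (1:ℝ) ≤ d2 := by exact_mod_cast hd2
    have hden : 2 * (d2 : ℝ) * ((d1 : ℝ) + 1) * p > 0 := by positivity
    rw [frogAlpha, frogG, if_neg h0, div_eq_div_iff (ne_of_gt hden) (ne_of_gt hD)]
    have hsq : Real.sqrt (frogDelta d1 d2 p) ^ 2 = frogDelta d1 d2 p := Real.sq_sqrt hΔ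
    unfold frogDelta frogKappa at *
    nlinarith [hsq]

set_option maxHeartbeats 800000 in
lemma frogG_continuousOn (d1 d2 : ℕ) (hd1 : 1 ≤ d1) (hd2 : 1 ≤ d2) :
    ContinuousOn (frogG d1 d2) (Set.Icc (0 : ℝ) 1) := by
  apply ContinuousOn.div
  · fun_prop
  · apply Continuous.continuousOn
    apply Continuous.add
    · fun_prop
    · exact Real.continuous_sqrt.comp (by unfold frogDelta; fun_prop)
  · intro p hp
    exact ne_of_gt (frogDenom_pos d1 d2 hd1 hd2 hp)

set_option maxHeartbeats 800000 in
lemma frogG_strictMonoOn (d1 d2 : ℕ) (hd1 : 1 ≤ d1) (hd2 : 1 ≤ d2) :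
    StrictMonoOn (frogG d1 d2) (Set.Icc (0 : ℝ) 1) := by
  intro p hp q hq hpq
  have hDp := frogDenom_pos d1 d2 hd1 hd2 hp
  have hDq := frogDenom_pos d1 d2 hd1 hd2 hq
  have hΔp := frogDelta_nonneg d1 d2 hp
  have hΔq := frogDelta_nonneg d1 d2 hq
  obtain ⟨hp0, hp1⟩ := hp
  obtain ⟨hq0, hq1⟩ := hq
  have h1 : (1:ℝ) ≤ d1 := by exact_mod_cast hd1
  have h2 : (1:ℝ) ≤ d2 := by exact_mod_cast hd2
  rw [frogG, frogG, div_lt_div_iff₀ hDp hDq]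
  -- key: p * √Δ(q) ≤ q * √Δ(p)
  have hkey : p * Real.sqrt (frogDelta d1 d2 q) ≤ q * Real.sqrt (frogDelta d1 d2 p) := by
    have hsq : p ^ 2 * frogDelta d1 d2 q ≤ q ^ 2 * frogDelta d1 d2 p := by
      have hA : 0 ≤ q ^ 2 - p ^ 2 := by nlinarith
      have hB : 0 ≤ (((d1:ℝ)+1)*((d2:ℝ)+1)) ^ 2 - ((d2:ℝ)-(d1:ℝ)) ^ 2 * p ^ 2 * q ^ 2 := by
        have hp2 : p ^ 2 ≤ 1 := by nlinarith
        have hq2 : q ^ 2 ≤ 1 := by nlinarith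
        have hpq2 : p ^ 2 * q ^ 2 ≤ 1 := by
          nlinarith [mul_nonneg (sq_nonneg p) (sub_nonneg.2 hq2)]
        have hc1 : (0:ℝ) ≤ ((d1:ℝ)+1)*((d2:ℝ)+1) - ((d2:ℝ)-(d1:ℝ)) := by nlinarith
        have hc2 : (0:ℝ) ≤ ((d1:ℝ)+1)*((d2:ℝ)+1) + ((d2:ℝ)-(d1:ℝ)) := by nlinarith
        nlinarith [mul_nonneg hc1 hc2,
          mul_nonneg (sq_nonneg ((d2:ℝ)-(d1:ℝ))) (sub_nonneg.2 hpq2)]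
      unfold frogDelta frogKappa
      nlinarith [mul_nonneg hA hB]
    calc p * Real.sqrt (frogDelta d1 d2 q)
        = Real.sqrt (p ^ 2 * frogDelta d1 d2 q) := by
          rw [Real.sqrt_mul (sq_nonneg p), Real.sqrt_sq hp0]
      _ ≤ Real.sqrt (q ^ 2 * frogDelta d1 d2 p) := Real.sqrt_le_sqrt hsq
      _ = q * Real.sqrt (frogDelta d1 d2 p) := by
          rw [Real.sqrt_mul (sq_nonneg q), Real.sqrt_sq hq0]
  have hpos : 0 < (2 * ((d2:ℝ) + 1)) := by positivity
  have hκ : p * q * ((d2:ℝ) - (d1:ℝ)) < frogKappa d1 d2 := by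
    have hpq1 : p * q ≤ 1 := by nlinarith [mul_nonneg hp0 (sub_nonneg.2 hq1)]
    have hκpos : (0:ℝ) + (d2:ℝ) < frogKappa d1 d2 := by unfold frogKappa; nlinarith
    rcases le_total ((d2:ℝ) - (d1:ℝ)) 0 with hc | hc
    · have := mul_nonpos_of_nonneg_of_nonpos (mul_nonneg hp0 hq0) hc
      linarith
    · have h3 : p * q * ((d2:ℝ) - (d1:ℝ)) ≤ (d2:ℝ) - (d1:ℝ) := by
        nlinarith [mul_nonneg (sub_nonneg.2 hpq1) hc]
      linarith
  have hstrict : p * (frogKappa d1 d2 + q ^ 2 * ((d2:ℝ) - (d1:ℝ)))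
      < q * (frogKappa d1 d2 + p ^ 2 * ((d2:ℝ) - (d1:ℝ))) := by
    nlinarith [mul_pos (sub_pos.2 hpq) (sub_pos.2 hκ)]
  have hfinal : p * (frogKappa d1 d2 + q ^ 2 * ((d2:ℝ) - (d1:ℝ)) + Real.sqrt (frogDelta d1 d2 q))
      < q * (frogKappa d1 d2 + p ^ 2 * ((d2:ℝ) - (d1:ℝ)) + Real.sqrt (frogDelta d1 d2 p)) := by
    have e1 : p * (frogKappa d1 d2 + q ^ 2 * ((d2:ℝ) - (d1:ℝ)) + Real.sqrt (frogDelta d1 d2 q))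
        = p * (frogKappa d1 d2 + q ^ 2 * ((d2:ℝ) - (d1:ℝ))) + p * Real.sqrt (frogDelta d1 d2 q) := by ring
    have e2 : q * (frogKappa d1 d2 + p ^ 2 * ((d2:ℝ) - (d1:ℝ)) + Real.sqrt (frogDelta d1 d2 p))
        = q * (frogKappa d1 d2 + p ^ 2 * ((d2:ℝ) - (d1:ℝ))) + q * Real.sqrt (frogDelta d1 d2 p) := by ring
    rw [e1, e2]
    exact add_lt_add_of_lt_of_le hstrict hkey
  calc 2 * ((d2:ℝ) + 1) * p * (frogKappa d1 d2 + q ^ 2 * ((d2:ℝ) - (d1:ℝ)) + Real.sqrt (frogDelta d1 d2 q))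
      = 2 * ((d2:ℝ) + 1) * (p * (frogKappa d1 d2 + q ^ 2 * ((d2:ℝ) - (d1:ℝ)) + Real.sqrt (frogDelta d1 d2 q))) := by ring
    _ < 2 * ((d2:ℝ) + 1) * (q * (frogKappa d1 d2 + p ^ 2 * ((d2:ℝ) - (d1:ℝ)) + Real.sqrt (frogDelta d1 d2 p))) := by
        exact mul_lt_mul_of_pos_left hfinal hpos
    _ = 2 * ((d2:ℝ) + 1) * q * (frogKappa d1 d2 + p ^ 2 * ((d2:ℝ) - (d1:ℝ)) + Real.sqrt (frogDelta d1 d2 p)) := by ring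


/-- For all d1, d2 ≥ 1, the functions α and β are continuous on [0,1]
and strictly increasing on [0,1]. -/
theorem frog_alpha_beta_continuous_strictMono (d1 d2 : ℕ) (hd1 : 1 ≤ d1) (hd2 : 1 ≤ d2) :
    ContinuousOn (frogAlpha d1 d2) (Set.Icc (0 : ℝ) 1) ∧
    StrictMonoOn (frogAlpha d1 d2) (Set.Icc (0 : ℝ) 1) ∧
    ContinuousOn (frogBeta d1 d2) (Set.Icc (0 : ℝ) 1) ∧
    StrictMonoOn (frogBeta d1 d2) (Set.Icc (0 : ℝ) 1) := by
  have key : ∀ e1 e2 : ℕ, 1 ≤ e1 → 1 ≤ e2 →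
      ContinuousOn (frogAlpha e1 e2) (Set.Icc (0 : ℝ) 1) ∧
      StrictMonoOn (frogAlpha e1 e2) (Set.Icc (0 : ℝ) 1) := by
    intro e1 e2 he1 he2
    have hEq := frogAlpha_eqOn e1 e2 he1 he2
    constructor
    · exact (frogG_continuousOn e1 e2 he1 he2).congr hEq
    · intro a ha b hb hab
      rw [hEq ha, hEq hb]
      exact frogG_strictMonoOn e1 e2 he1 he2 ha hb hab
  have hβ : frogBeta d1 d2 = frogAlpha d2 d1 := by
    funext p
    have hK : frogKappa d2 d1 = frogKappa d1 d2 := by unfold frogKappa; ring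
    have hΔ : frogDelta d2 d1 p = frogDelta d1 d2 p := by
      unfold frogDelta frogKappa; ring
    rw [frogBeta, frogAlpha, hK, hΔ]
  obtain ⟨hc1, hm1⟩ := key d1 d2 hd1 hd2
  obtain ⟨hc2, hm2⟩ := key d2 d1 hd2 hd1
  rw [hβ]
  exact ⟨hc1, hm1, hc2, hm2⟩
end

section
/- Fix integers d1, d2 ≥ 1 with d1 ≥ 2 or d2 ≥ 2, and q ∈ (0,1]. Then f(0) = −1/(d1·d2) < 0 and f(1) > 0, and consequently there exists a unique p̃ ∈ (0,1) with f(p̃) = 0. -/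
/-- φₙ(p) = q·[α(p)β(p)(1+q(1−β(p)))]ⁿ·[1+q(1−α(p))]^{n−1}. -/
noncomputable def frogPhi (d1 d2 : ℕ) (q : ℝ) (n : ℕ) (p : ℝ) : ℝ :=
  q * (frogAlpha d1 d2 p * frogBeta d1 d2 p * (1 + q * (1 - frogBeta d1 d2 p))) ^ n *
    (1 + q * (1 - frogAlpha d1 d2 p)) ^ (n - 1)

/-- f(p) = α(p)β(p)(1+q(1−α(p)))(1+q(1−β(p))) − 1/(d1 d2). -/
noncomputable def frogF (d1 d2 : ℕ) (q : ℝ) (p : ℝ) : ℝ :=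
  frogAlpha d1 d2 p * frogBeta d1 d2 p * (1 + q * (1 - frogAlpha d1 d2 p)) *
    (1 + q * (1 - frogBeta d1 d2 p)) - 1 / ((d1 : ℝ) * (d2 : ℝ))

/-- fₙ(p) = (φₙ(p))^{1/n} − 1/(d1 d2). -/
noncomputable def frogFn (d1 d2 : ℕ) (q : ℝ) (n : ℕ) (p : ℝ) : ℝ :=
  (frogPhi d1 d2 q n p) ^ ((1 : ℝ) / (n : ℝ)) - 1 / ((d1 : ℝ) * (d2 : ℝ))

lemma frogDelta_ge (d1 d2 : ℕ) (ha : (1:ℝ) ≤ d1) (hb : (1:ℝ) ≤ d2)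
    {p : ℝ} (hp0 : 0 ≤ p) (hp1 : p ≤ 1) :
    ((d1:ℝ) * d2 - 1)^2 ≤ frogDelta d1 d2 p := by
  have hp2 : p^2 ≤ 1 := by nlinarith
  have hp4 : p^4 ≤ 1 := by nlinarith
  have ha0 : (0:ℝ) ≤ d1 := zero_le_one.trans ha
  have hb0 : (0:ℝ) ≤ d2 := zero_le_one.trans hb
  have hu : (d1:ℝ)*d2 + 1 ≤ ((d1:ℝ)+1)*((d2:ℝ)+1) - ((d1:ℝ)+d2)*p^2 := by nlinarith
  have hu2 : (0:ℝ) ≤ ((d1:ℝ)+1)*((d2:ℝ)+1) - ((d1:ℝ)+d2)*p^2 + ((d1:ℝ)*d2+1) := by nlinarith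
  unfold frogDelta frogKappa
  nlinarith [mul_nonneg (sub_nonneg.mpr hu) hu2,
    mul_nonneg (mul_nonneg ha0 hb0) (sub_nonneg.mpr hp4)]

lemma frogDelta_nonneg_s9 (d1 d2 : ℕ) (ha : (1:ℝ) ≤ d1) (hb : (1:ℝ) ≤ d2)
    {p : ℝ} (hp0 : 0 ≤ p) (hp1 : p ≤ 1) : 0 ≤ frogDelta d1 d2 p :=
  le_trans (sq_nonneg _) (frogDelta_ge d1 d2 ha hb hp0 hp1)
lemma frogAlpha_eq (d1 d2 : ℕ) (ha : (1:ℝ) ≤ d1) (hb : (1:ℝ) ≤ d2)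
    {p : ℝ} (hp0 : 0 < p) (hp1 : p ≤ 1) :
    frogAlpha d1 d2 p =
      2 * ((d2:ℝ) + 1) * p /
        (frogKappa d1 d2 + p ^ 2 * ((d2:ℝ) - d1) + Real.sqrt (frogDelta d1 d2 p)) := by
  have hΔ : 0 ≤ frogDelta d1 d2 p := frogDelta_nonneg_s9 d1 d2 ha hb hp0.le hp1
  set S := Real.sqrt (frogDelta d1 d2 p) with hSdef
  have hS0 : 0 ≤ S := Real.sqrt_nonneg _
  have hS2 : S ^ 2 = frogDelta d1 d2 p := Real.sq_sqrt hΔ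
  have hB : (0:ℝ) < frogKappa d1 d2 + p ^ 2 * ((d2:ℝ) - d1) := by
    have hp2 : p^2 ≤ 1 := by nlinarith
    unfold frogKappa; nlinarith [sq_nonneg p]
  rw [frogAlpha, if_neg hp0.ne']
  rw [div_eq_div_iff (by positivity) (by positivity)]
  unfold frogDelta frogKappa at hS2
  unfold frogKappa
  linear_combination -hS2

lemma frogBeta_eq (d1 d2 : ℕ) (ha : (1:ℝ) ≤ d1) (hb : (1:ℝ) ≤ d2)
    {p : ℝ} (hp0 : 0 < p) (hp1 : p ≤ 1) :
    frogBeta d1 d2 p =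
      2 * ((d1:ℝ) + 1) * p /
        (frogKappa d1 d2 + p ^ 2 * ((d1:ℝ) - d2) + Real.sqrt (frogDelta d1 d2 p)) := by
  have hΔ : 0 ≤ frogDelta d1 d2 p := frogDelta_nonneg_s9 d1 d2 ha hb hp0.le hp1
  set S := Real.sqrt (frogDelta d1 d2 p) with hSdef
  have hS0 : 0 ≤ S := Real.sqrt_nonneg _
  have hS2 : S ^ 2 = frogDelta d1 d2 p := Real.sq_sqrt hΔ
  have hB : (0:ℝ) < frogKappa d1 d2 + p ^ 2 * ((d1:ℝ) - d2) := by
    have hp2 : p^2 ≤ 1 := by nlinarith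
    unfold frogKappa; nlinarith [sq_nonneg p]
  rw [frogBeta, if_neg hp0.ne']
  rw [div_eq_div_iff (by positivity) (by positivity)]
  unfold frogDelta frogKappa at hS2
  unfold frogKappa
  linear_combination -hS2
lemma frogAlpha_pos (d1 d2 : ℕ) (ha : (1:ℝ) ≤ d1) (hb : (1:ℝ) ≤ d2)
    {p : ℝ} (hp0 : 0 < p) (hp1 : p ≤ 1) : 0 < frogAlpha d1 d2 p := by
  rw [frogAlpha_eq d1 d2 ha hb hp0 hp1]
  have hp2 : p^2 ≤ 1 := by nlinarith
  have hB : (0:ℝ) < frogKappa d1 d2 + p ^ 2 * ((d2:ℝ) - d1) := by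
    unfold frogKappa; nlinarith [sq_nonneg p]
  have := Real.sqrt_nonneg (frogDelta d1 d2 p)
  positivity

lemma frogBeta_pos (d1 d2 : ℕ) (ha : (1:ℝ) ≤ d1) (hb : (1:ℝ) ≤ d2)
    {p : ℝ} (hp0 : 0 < p) (hp1 : p ≤ 1) : 0 < frogBeta d1 d2 p := by
  rw [frogBeta_eq d1 d2 ha hb hp0 hp1]
  have hp2 : p^2 ≤ 1 := by nlinarith
  have hB : (0:ℝ) < frogKappa d1 d2 + p ^ 2 * ((d1:ℝ) - d2) := by
    unfold frogKappa; nlinarith [sq_nonneg p]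
  have := Real.sqrt_nonneg (frogDelta d1 d2 p)
  positivity

lemma frogAlpha_le (d1 d2 : ℕ) (ha : (1:ℝ) ≤ d1) (hb : (1:ℝ) ≤ d2)
    {p : ℝ} (hp0 : 0 < p) (hp1 : p ≤ 1) : frogAlpha d1 d2 p ≤ 2 * p := by
  rw [frogAlpha_eq d1 d2 ha hb hp0 hp1]
  have hp2 : p^2 ≤ 1 := by nlinarith
  have hS := Real.sqrt_nonneg (frogDelta d1 d2 p)
  have hB : ((d2:ℝ) + 1) ≤ frogKappa d1 d2 + p ^ 2 * ((d2:ℝ) - d1) + Real.sqrt (frogDelta d1 d2 p) := by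
    unfold frogKappa; nlinarith [sq_nonneg p]
  rw [div_le_iff₀ (by nlinarith)]
  nlinarith [mul_le_mul_of_nonneg_left hB (le_of_lt (mul_pos two_pos hp0))]

lemma frogBeta_le (d1 d2 : ℕ) (ha : (1:ℝ) ≤ d1) (hb : (1:ℝ) ≤ d2)
    {p : ℝ} (hp0 : 0 < p) (hp1 : p ≤ 1) : frogBeta d1 d2 p ≤ 2 * p := by
  rw [frogBeta_eq d1 d2 ha hb hp0 hp1]
  have hp2 : p^2 ≤ 1 := by nlinarith
  have hS := Real.sqrt_nonneg (frogDelta d1 d2 p)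
  have hB : ((d1:ℝ) + 1) ≤ frogKappa d1 d2 + p ^ 2 * ((d1:ℝ) - d2) + Real.sqrt (frogDelta d1 d2 p) := by
    unfold frogKappa; nlinarith [sq_nonneg p]
  rw [div_le_iff₀ (by nlinarith)]
  nlinarith [mul_le_mul_of_nonneg_left hB (le_of_lt (mul_pos two_pos hp0))]
set_option maxHeartbeats 1000000 in
lemma frogAlpha_mono (d1 d2 : ℕ) (ha : (1:ℝ) ≤ d1) (hb : (1:ℝ) ≤ d2)
    {p p' : ℝ} (hp0 : 0 < p) (hpp : p < p') (hp1 : p' ≤ 1) :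
    frogAlpha d1 d2 p < frogAlpha d1 d2 p' := by
  have hp0' : 0 < p' := hp0.trans hpp
  have hp1' : p ≤ 1 := le_of_lt (lt_of_lt_of_le hpp hp1)
  have hp2 : p^2 ≤ 1 := by nlinarith
  have hp2' : p'^2 ≤ 1 := by nlinarith
  rw [frogAlpha_eq d1 d2 ha hb hp0 hp1', frogAlpha_eq d1 d2 ha hb hp0' hp1]
  have hΔ : 0 ≤ frogDelta d1 d2 p := frogDelta_nonneg_s9 d1 d2 ha hb hp0.le hp1'
  have hΔ' : 0 ≤ frogDelta d1 d2 p' := frogDelta_nonneg_s9 d1 d2 ha hb hp0'.le hp1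
  set S := Real.sqrt (frogDelta d1 d2 p) with hSd
  set S' := Real.sqrt (frogDelta d1 d2 p') with hSd'
  have hS0 : 0 ≤ S := Real.sqrt_nonneg _
  have hS0' : 0 ≤ S' := Real.sqrt_nonneg _
  have hB : (0:ℝ) < frogKappa d1 d2 + p ^ 2 * ((d2:ℝ) - d1) := by
    unfold frogKappa; nlinarith [sq_nonneg p]
  have hB' : (0:ℝ) < frogKappa d1 d2 + p' ^ 2 * ((d2:ℝ) - d1) := by
    unfold frogKappa; nlinarith [sq_nonneg p']
  rw [div_lt_div_iff₀ (by nlinarith) (by nlinarith)]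
  have key1 : p * S' ≤ p' * S := by
    have hsq : p^2 * frogDelta d1 d2 p' ≤ p'^2 * frogDelta d1 d2 p := by
      have hKE : ((d2:ℝ) - d1)^2 * (p^2 * p'^2) ≤ (((d1:ℝ)+1) * ((d2:ℝ)+1))^2 := by
        have hKe1 : (0:ℝ) < ((d1:ℝ)+1)*((d2:ℝ)+1) - ((d2:ℝ) - d1) := by nlinarith
        have hKe2 : (0:ℝ) < ((d1:ℝ)+1)*((d2:ℝ)+1) + ((d2:ℝ) - d1) := by nlinarith
        have h1 : ((d2:ℝ) - d1)^2 ≤ (((d1:ℝ)+1) * ((d2:ℝ)+1))^2 := by nlinarith [mul_pos hKe1 hKe2]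
        have h2 : p^2 * p'^2 ≤ 1 := by nlinarith [sq_nonneg p, sq_nonneg p']
        nlinarith [sq_nonneg ((d2:ℝ) - d1), mul_nonneg (sq_nonneg p) (sq_nonneg p')]
      unfold frogDelta frogKappa
      have hsq2 : p^2 ≤ p'^2 := by nlinarith
      nlinarith [mul_nonneg (sub_nonneg.mpr hsq2)
        (sub_nonneg.mpr hKE)]
    calc p * S' = Real.sqrt (p^2 * frogDelta d1 d2 p') := by
          rw [Real.sqrt_mul (sq_nonneg p), Real.sqrt_sq hp0.le]
      _ ≤ Real.sqrt (p'^2 * frogDelta d1 d2 p) := Real.sqrt_le_sqrt hsq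
      _ = p' * S := by rw [Real.sqrt_mul (sq_nonneg p'), Real.sqrt_sq hp0'.le]
  have key2 : p * (frogKappa d1 d2 + p' ^ 2 * ((d2:ℝ) - d1)) <
      p' * (frogKappa d1 d2 + p ^ 2 * ((d2:ℝ) - d1)) := by
    have hppe : p * p' * ((d2:ℝ) - d1) < ((d1:ℝ)+1) * ((d2:ℝ)+1) := by
      have hpp1 : p * p' ≤ 1 := by nlinarith
      have hpp0 : 0 < p * p' := mul_pos hp0 hp0'
      nlinarith [mul_le_mul_of_nonneg_left (show ((d2:ℝ) - d1) ≤ (d2:ℝ) by linarith) hpp0.le,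
        mul_le_mul_of_nonneg_right hpp1 (show (0:ℝ) ≤ d2 by linarith)]
    unfold frogKappa
    nlinarith [mul_pos (sub_pos.mpr hpp) (sub_pos.mpr hppe)]
  nlinarith [mul_lt_mul_of_pos_left (add_lt_add_of_lt_of_le key2 key1)
    (show (0:ℝ) < 2 * ((d2:ℝ)+1) by linarith)]
set_option maxHeartbeats 1000000 in
lemma frogBeta_mono (d1 d2 : ℕ) (ha : (1:ℝ) ≤ d1) (hb : (1:ℝ) ≤ d2)
    {p p' : ℝ} (hp0 : 0 < p) (hpp : p < p') (hp1 : p' ≤ 1) :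
    frogBeta d1 d2 p < frogBeta d1 d2 p' := by
  have hp0' : 0 < p' := hp0.trans hpp
  have hp1' : p ≤ 1 := le_of_lt (lt_of_lt_of_le hpp hp1)
  have hp2 : p^2 ≤ 1 := by nlinarith
  have hp2' : p'^2 ≤ 1 := by nlinarith
  rw [frogBeta_eq d1 d2 ha hb hp0 hp1', frogBeta_eq d1 d2 ha hb hp0' hp1]
  have hΔ : 0 ≤ frogDelta d1 d2 p := frogDelta_nonneg_s9 d1 d2 ha hb hp0.le hp1'
  have hΔ' : 0 ≤ frogDelta d1 d2 p' := frogDelta_nonneg_s9 d1 d2 ha hb hp0'.le hp1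
  set S := Real.sqrt (frogDelta d1 d2 p) with hSd
  set S' := Real.sqrt (frogDelta d1 d2 p') with hSd'
  have hS0 : 0 ≤ S := Real.sqrt_nonneg _
  have hS0' : 0 ≤ S' := Real.sqrt_nonneg _
  have hB : (0:ℝ) < frogKappa d1 d2 + p ^ 2 * ((d1:ℝ) - d2) := by
    unfold frogKappa; nlinarith [sq_nonneg p]
  have hB' : (0:ℝ) < frogKappa d1 d2 + p' ^ 2 * ((d1:ℝ) - d2) := by
    unfold frogKappa; nlinarith [sq_nonneg p']
  rw [div_lt_div_iff₀ (by nlinarith) (by nlinarith)]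
  have key1 : p * S' ≤ p' * S := by
    have hsq : p^2 * frogDelta d1 d2 p' ≤ p'^2 * frogDelta d1 d2 p := by
      have hKE : ((d2:ℝ) - d1)^2 * (p^2 * p'^2) ≤ (((d1:ℝ)+1) * ((d2:ℝ)+1))^2 := by
        have hKe1 : (0:ℝ) < ((d1:ℝ)+1)*((d2:ℝ)+1) - ((d2:ℝ) - d1) := by nlinarith
        have hKe2 : (0:ℝ) < ((d1:ℝ)+1)*((d2:ℝ)+1) + ((d2:ℝ) - d1) := by nlinarith
        have h1 : ((d2:ℝ) - d1)^2 ≤ (((d1:ℝ)+1) * ((d2:ℝ)+1))^2 := by nlinarith [mul_pos hKe1 hKe2]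
        have h2 : p^2 * p'^2 ≤ 1 := by nlinarith [sq_nonneg p, sq_nonneg p']
        nlinarith [sq_nonneg ((d2:ℝ) - d1), mul_nonneg (sq_nonneg p) (sq_nonneg p')]
      unfold frogDelta frogKappa
      have hsq2 : p^2 ≤ p'^2 := by nlinarith
      nlinarith [mul_nonneg (sub_nonneg.mpr hsq2)
        (sub_nonneg.mpr hKE)]
    calc p * S' = Real.sqrt (p^2 * frogDelta d1 d2 p') := by
          rw [Real.sqrt_mul (sq_nonneg p), Real.sqrt_sq hp0.le]
      _ ≤ Real.sqrt (p'^2 * frogDelta d1 d2 p) := Real.sqrt_le_sqrt hsq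
      _ = p' * S := by rw [Real.sqrt_mul (sq_nonneg p'), Real.sqrt_sq hp0'.le]
  have key2 : p * (frogKappa d1 d2 + p' ^ 2 * ((d1:ℝ) - d2)) <
      p' * (frogKappa d1 d2 + p ^ 2 * ((d1:ℝ) - d2)) := by
    have hppe : p * p' * ((d1:ℝ) - d2) < ((d1:ℝ)+1) * ((d2:ℝ)+1) := by
      have hpp1 : p * p' ≤ 1 := by nlinarith
      have hpp0 : 0 < p * p' := mul_pos hp0 hp0'
      nlinarith [mul_le_mul_of_nonneg_left (show ((d1:ℝ) - d2) ≤ (d1:ℝ) by linarith) hpp0.le,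
        mul_le_mul_of_nonneg_right hpp1 (show (0:ℝ) ≤ d1 by linarith)]
    unfold frogKappa
    nlinarith [mul_pos (sub_pos.mpr hpp) (sub_pos.mpr hppe)]
  nlinarith [mul_lt_mul_of_pos_left (add_lt_add_of_lt_of_le key2 key1)
    (show (0:ℝ) < 2 * ((d1:ℝ)+1) by linarith)]
lemma frogSqrtDelta_one (d1 d2 : ℕ) (ha : (1:ℝ) ≤ d1) (hb : (1:ℝ) ≤ d2) :
    Real.sqrt (frogDelta d1 d2 1) = (d1:ℝ) * d2 - 1 := by
  have h1 : frogDelta d1 d2 1 = ((d1:ℝ)*d2 - 1)^2 := by unfold frogDelta frogKappa; ring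
  rw [h1, Real.sqrt_sq (by nlinarith)]

lemma frogAlpha_one (d1 d2 : ℕ) (ha : (1:ℝ) ≤ d1) (hb : (1:ℝ) ≤ d2) :
    frogAlpha d1 d2 1 = ((d2:ℝ) + 1) / ((d2:ℝ) * ((d1:ℝ) + 1)) := by
  rw [frogAlpha, if_neg one_ne_zero, frogSqrtDelta_one d1 d2 ha hb]
  unfold frogKappa
  rw [div_eq_div_iff (by positivity) (by positivity)]
  ring

lemma frogBeta_one (d1 d2 : ℕ) (ha : (1:ℝ) ≤ d1) (hb : (1:ℝ) ≤ d2) :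
    frogBeta d1 d2 1 = ((d1:ℝ) + 1) / ((d1:ℝ) * ((d2:ℝ) + 1)) := by
  rw [frogBeta, if_neg one_ne_zero, frogSqrtDelta_one d1 d2 ha hb]
  unfold frogKappa
  rw [div_eq_div_iff (by positivity) (by positivity)]
  ring

lemma frogAlpha_lt_one (d1 d2 : ℕ) (ha : (1:ℝ) ≤ d1) (hb : (1:ℝ) ≤ d2)
    (hab : (2:ℝ) ≤ (d1:ℝ) * d2) {p : ℝ} (hp0 : 0 < p) (hp1 : p ≤ 1) :
    frogAlpha d1 d2 p < 1 := by
  have h1 : frogAlpha d1 d2 1 < 1 := by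
    rw [frogAlpha_one d1 d2 ha hb, div_lt_one (by positivity)]
    nlinarith
  rcases lt_or_eq_of_le hp1 with h | h
  · exact (frogAlpha_mono d1 d2 ha hb hp0 h le_rfl).trans h1
  · rw [h]; exact h1

lemma frogBeta_lt_one (d1 d2 : ℕ) (ha : (1:ℝ) ≤ d1) (hb : (1:ℝ) ≤ d2)
    (hab : (2:ℝ) ≤ (d1:ℝ) * d2) {p : ℝ} (hp0 : 0 < p) (hp1 : p ≤ 1) :
    frogBeta d1 d2 p < 1 := by
  have h1 : frogBeta d1 d2 1 < 1 := by
    rw [frogBeta_one d1 d2 ha hb, div_lt_one (by positivity)]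
    nlinarith
  rcases lt_or_eq_of_le hp1 with h | h
  · exact (frogBeta_mono d1 d2 ha hb hp0 h le_rfl).trans h1
  · rw [h]; exact h1
lemma frogF_strictMonoOn (d1 d2 : ℕ) (ha : (1:ℝ) ≤ d1) (hb : (1:ℝ) ≤ d2)
    (hab : (2:ℝ) ≤ (d1:ℝ) * d2) {q : ℝ} (hq0 : 0 < q) (hq1 : q ≤ 1) :
    StrictMonoOn (frogF d1 d2 q) (Set.Ioc 0 1) := by
  rintro p ⟨hp0, hp1⟩ p' ⟨hp0', hp1'⟩ hpp
  set x := frogAlpha d1 d2 p with hxd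
  set x' := frogAlpha d1 d2 p' with hxd'
  set y := frogBeta d1 d2 p with hyd
  set y' := frogBeta d1 d2 p' with hyd'
  have hx : 0 < x := frogAlpha_pos d1 d2 ha hb hp0 hp1
  have hy : 0 < y := frogBeta_pos d1 d2 ha hb hp0 hp1
  have hx1 : x < 1 := frogAlpha_lt_one d1 d2 ha hb hab hp0 hp1
  have hy1 : y < 1 := frogBeta_lt_one d1 d2 ha hb hab hp0 hp1
  have hx1' : x' < 1 := frogAlpha_lt_one d1 d2 ha hb hab hp0' hp1'
  have hy1' : y' < 1 := frogBeta_lt_one d1 d2 ha hb hab hp0' hp1'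
  have hxx : x < x' := frogAlpha_mono d1 d2 ha hb hp0 hpp hp1'
  have hyy : y < y' := frogBeta_mono d1 d2 ha hb hp0 hpp hp1'
  have hgx : x * (1 + q*(1-x)) < x' * (1 + q*(1-x')) := by
    nlinarith [mul_pos (sub_pos.mpr hxx) (show 0 < 1 + q - q*(x+x') by nlinarith)]
  have hgy : y * (1 + q*(1-y)) < y' * (1 + q*(1-y')) := by
    nlinarith [mul_pos (sub_pos.mpr hyy) (show 0 < 1 + q - q*(y+y') by nlinarith)]
  have hgxpos : 0 < x * (1 + q*(1-x)) := by
    have := mul_pos hq0 (sub_pos.mpr hx1)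
    exact mul_pos hx (by linarith)
  have hgypos : 0 < y * (1 + q*(1-y)) := by
    have := mul_pos hq0 (sub_pos.mpr hy1)
    exact mul_pos hy (by linarith)
  have hmul := mul_lt_mul'' hgx hgy hgxpos.le hgypos.le
  show frogF d1 d2 q p < frogF d1 d2 q p'
  unfold frogF
  rw [← hxd, ← hxd', ← hyd, ← hyd']
  nlinarith [hmul]

lemma frogF_contOn (d1 d2 : ℕ) (ha : (1:ℝ) ≤ d1) (hb : (1:ℝ) ≤ d2) (q : ℝ)
    {a : ℝ} (ha0 : 0 < a) : ContinuousOn (frogF d1 d2 q) (Set.Icc a 1) := by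
  have hne : ∀ p ∈ Set.Icc a 1, p ≠ 0 := fun p hp => (lt_of_lt_of_le ha0 hp.1).ne'
  have hΔ : Continuous (fun p : ℝ => frogDelta d1 d2 p) := by
    unfold frogDelta frogKappa; fun_prop
  have hα : ContinuousOn (frogAlpha d1 d2) (Set.Icc a 1) := by
    refine ContinuousOn.congr (f := fun p : ℝ =>
      (frogKappa d1 d2 + p ^ 2 * ((d2:ℝ) - d1) - Real.sqrt (frogDelta d1 d2 p)) /
        (2 * (d2:ℝ) * ((d1:ℝ) + 1) * p)) ?_ ?_
    · apply ContinuousOn.div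
      · exact Continuous.continuousOn (by fun_prop)
      · exact Continuous.continuousOn (by fun_prop)
      · intro p hp
        have h1 := hp.1
        exact (mul_pos (mul_pos (mul_pos two_pos
          (show (0:ℝ) < d2 by linarith)) (by linarith)) (lt_of_lt_of_le ha0 h1)).ne'
    · intro p hp
      rw [frogAlpha, if_neg (hne p hp)]
  have hβ : ContinuousOn (frogBeta d1 d2) (Set.Icc a 1) := by
    refine ContinuousOn.congr (f := fun p : ℝ =>
      (frogKappa d1 d2 + p ^ 2 * ((d1:ℝ) - d2) - Real.sqrt (frogDelta d1 d2 p)) /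
        (2 * (d1:ℝ) * ((d2:ℝ) + 1) * p)) ?_ ?_
    · apply ContinuousOn.div
      · exact Continuous.continuousOn (by fun_prop)
      · exact Continuous.continuousOn (by fun_prop)
      · intro p hp
        have h1 := hp.1
        exact (mul_pos (mul_pos (mul_pos two_pos
          (show (0:ℝ) < d1 by linarith)) (by linarith)) (lt_of_lt_of_le ha0 h1)).ne'
    · intro p hp
      rw [frogBeta, if_neg (hne p hp)]
  unfold frogF
  exact (((hα.mul hβ).mul (continuousOn_const.add (continuousOn_const.mul
    (continuousOn_const.sub hα)))).mul (continuousOn_const.add (continuousOn_const.mul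
    (continuousOn_const.sub hβ)))).sub continuousOn_const
set_option maxHeartbeats 2000000 in
/-- For d1, d2 ≥ 1 with d1 ≥ 2 or d2 ≥ 2, and q ∈ (0,1]:
f(0) = −1/(d1 d2) < 0, f(1) > 0, and f has a unique root p̃ in (0,1). -/
theorem frogF_sign_and_unique_root (d1 d2 : ℕ) (hd1 : 1 ≤ d1) (hd2 : 1 ≤ d2)
    (hd : 2 ≤ d1 ∨ 2 ≤ d2) (q : ℝ) (hq : q ∈ Set.Ioc (0 : ℝ) 1) :
    frogF d1 d2 q 0 = -(1 / ((d1 : ℝ) * (d2 : ℝ))) ∧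
    frogF d1 d2 q 0 < 0 ∧
    0 < frogF d1 d2 q 1 ∧
    ∃! p : ℝ, p ∈ Set.Ioo (0 : ℝ) 1 ∧ frogF d1 d2 q p = 0 := by
  obtain ⟨hq0, hq1⟩ := hq
  have ha : (1:ℝ) ≤ d1 := by exact_mod_cast hd1
  have hb : (1:ℝ) ≤ d2 := by exact_mod_cast hd2
  have hab : (2:ℝ) ≤ (d1:ℝ) * d2 := by
    have h : 2 ≤ d1 * d2 := by
      rcases hd with h | h
      · calc 2 ≤ d1 := h
          _ = d1 * 1 := (mul_one d1).symm
          _ ≤ d1 * d2 := Nat.mul_le_mul_left d1 hd2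
      · calc 2 ≤ d2 := h
          _ = 1 * d2 := (one_mul d2).symm
          _ ≤ d1 * d2 := Nat.mul_le_mul_right d2 hd1
    calc (2:ℝ) ≤ ((d1 * d2 : ℕ) : ℝ) := by exact_mod_cast h
      _ = (d1:ℝ) * d2 := by push_cast; ring
  have habpos : (0:ℝ) < (d1:ℝ) * d2 := lt_of_lt_of_le two_pos hab
  -- f(0)
  have hf0 : frogF d1 d2 q 0 = -(1 / ((d1:ℝ) * d2)) := by
    unfold frogF frogAlpha frogBeta
    simp
  have hf0neg : frogF d1 d2 q 0 < 0 := by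
    rw [hf0]
    simp only [neg_neg, neg_lt_zero]
    positivity
  -- f(1)
  have hf1 : 0 < frogF d1 d2 q 1 := by
    have hα1 := frogAlpha_one d1 d2 ha hb
    have hβ1 := frogBeta_one d1 d2 ha hb
    set x := ((d2:ℝ) + 1) / ((d2:ℝ) * ((d1:ℝ) + 1)) with hxdef
    set y := ((d1:ℝ) + 1) / ((d1:ℝ) * ((d2:ℝ) + 1)) with hydef
    have hx : 0 < x := by positivity
    have hy : 0 < y := by positivity
    have hx1 : x < 1 := by
      rw [hxdef, div_lt_one (by positivity)]; nlinarith
    have hy1 : y < 1 := by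
      rw [hydef, div_lt_one (by positivity)]; nlinarith
    have hxy : x * y = 1 / ((d1:ℝ) * d2) := by
      rw [hxdef, hydef]; field_simp
    have hC : 1 < 1 + q * (1 - x) := by nlinarith [mul_pos hq0 (sub_pos.mpr hx1)]
    have hD : 1 < 1 + q * (1 - y) := by nlinarith [mul_pos hq0 (sub_pos.mpr hy1)]
    have hCD : 1 < (1 + q * (1 - x)) * (1 + q * (1 - y)) := by nlinarith
    unfold frogF
    rw [hα1, hβ1, ← hxy]
    nlinarith [mul_pos (mul_pos hx hy) (sub_pos.mpr hCD)]
  refine ⟨hf0, hf0neg, hf1, ?_⟩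
  -- point with negative value
  set a0 : ℝ := 1 / (8 * ((d1:ℝ) * d2)) with ha0def
  have ha00 : 0 < a0 := by positivity
  have ha01 : a0 < 1 := by
    rw [ha0def, div_lt_one (by positivity)]; nlinarith
  have hfa0 : frogF d1 d2 q a0 < 0 := by
    set x := frogAlpha d1 d2 a0 with hxd
    set y := frogBeta d1 d2 a0 with hyd
    have hx : 0 < x := frogAlpha_pos d1 d2 ha hb ha00 ha01.le
    have hy : 0 < y := frogBeta_pos d1 d2 ha hb ha00 ha01.le
    have hx1 : x < 1 := frogAlpha_lt_one d1 d2 ha hb hab ha00 ha01.le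
    have hy1 : y < 1 := frogBeta_lt_one d1 d2 ha hb hab ha00 ha01.le
    have hxle : x ≤ 2 * a0 := frogAlpha_le d1 d2 ha hb ha00 ha01.le
    have hyle : y ≤ 2 * a0 := frogBeta_le d1 d2 ha hb ha00 ha01.le
    have h1 : x * y ≤ 4 * a0^2 := by
      calc x * y ≤ (2*a0) * (2*a0) := mul_le_mul hxle hyle hy.le (by positivity)
        _ = 4 * a0^2 := by ring
    have hCpos : 0 < 1 + q * (1 - x) := by nlinarith [mul_pos hq0 (sub_pos.mpr hx1)]
    have hDpos : 0 < 1 + q * (1 - y) := by nlinarith [mul_pos hq0 (sub_pos.mpr hy1)]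
    have hC2 : 1 + q * (1 - x) ≤ 2 := by nlinarith [mul_pos hq0 hx]
    have hD2 : 1 + q * (1 - y) ≤ 2 := by nlinarith [mul_pos hq0 hy]
    have h2 : x * y * (1 + q * (1 - x)) ≤ 4 * a0^2 * 2 :=
      mul_le_mul h1 hC2 hCpos.le (by positivity)
    have h3 : x * y * (1 + q * (1 - x)) * (1 + q * (1 - y)) ≤ 4 * a0^2 * 2 * 2 :=
      mul_le_mul h2 hD2 hDpos.le (by positivity)
    have hlt : 4 * a0^2 * 2 * 2 < 1 / ((d1:ℝ) * d2) := by
      have hc : 1 / ((d1:ℝ) * d2) = 8 * a0 := by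
        rw [ha0def]; field_simp
      have ha0half : a0 < 1/2 := by
        rw [ha0def, div_lt_div_iff₀ (by positivity) two_pos]; nlinarith
      rw [hc]
      nlinarith [mul_pos ha00 (show 0 < 1 - 2*a0 by linarith)]
    unfold frogF
    rw [← hxd, ← hyd]
    linarith
  -- IVT
  have hcont : ContinuousOn (frogF d1 d2 q) (Set.Icc a0 1) := frogF_contOn d1 d2 ha hb q ha00
  have hsub := intermediate_value_Ioo ha01.le hcont
  obtain ⟨pt, hptmem, hpt⟩ := hsub (Set.mem_Ioo.mpr ⟨hfa0, hf1⟩)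
  have hpt0 : 0 < pt := lt_trans ha00 hptmem.1
  have hmono := frogF_strictMonoOn d1 d2 ha hb hab hq0 hq1
  refine ⟨pt, ⟨⟨hpt0, hptmem.2⟩, hpt⟩, ?_⟩
  rintro z ⟨⟨hz0, hz1⟩, hz⟩
  exact hmono.injOn (Set.mem_Ioc.mpr ⟨hz0, hz1.le⟩)
    (Set.mem_Ioc.mpr ⟨hpt0, hptmem.2.le⟩) (hz.trans hpt.symm)
end
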